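/- Let X ⊂ ℙ(W) = ℙⁿ satisfy condition (K₂) and contain no lines and no conics. Then W is a 4-very ample linear system on X; in particular, no 2-plane in ℙⁿ meets X in a zero-dimensional scheme of length ≥ 4. -/

import Mathlib

/-!
STATEMENT 7: Assume `X ⊂ ℙ(W) = ℙⁿ` satisfies condition `(K₂)` (it is cut out by
quadrics `F₀, …, F_{m-1}` whose Koszul relations are generated by linear syzygies) and
contains no lines and no conics.  Then the embedding system `W` is 4-very ample on `X`;
equivalently (since every length-4 subscheme lies in some `ℙ³` and spans it iff it is
not planar): no 2-plane `M ≅ ℙ² ⊆ ℙⁿ` intersects `X` in a zero-dimensional scheme of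
length ≥ 4.

Encoding: a 2-plane is an injective linear parametrization `A : ℂ³ → ℂ^{n+1}`; the
scheme `X ∩ M` is cut out in `ℙ²` by the restricted quadrics, and its length is read off
from the eventual value of the Hilbert function of `ℂ[w₀,w₁,w₂]/(restrictions)`, which
must eventually be `≤ 3`.
-/

open MvPolynomial

variable {n m : ℕ}

def LinearSyzygies (F : Fin m → MvPolynomial (Fin (n + 1)) ℂ) :
    Set (Fin m → MvPolynomial (Fin (n + 1)) ℂ) :=
  {a | (∀ i, (a i).IsHomogeneous 1) ∧ ∑ i, a i * F i = 0}

def SatisfiesK (F : Fin m → MvPolynomial (Fin (n + 1)) ℂ) : Prop :=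
  ∀ i j : Fin m,
    (Pi.single i (F j) - Pi.single j (F i)) ∈
      Submodule.span (MvPolynomial (Fin (n + 1)) ℂ) (LinearSyzygies F)

def coneX (F : Fin m → MvPolynomial (Fin (n + 1)) ℂ) : Set (Fin (n + 1) → ℂ) :=
  {z | ∀ i, MvPolynomial.eval z (F i) = 0}

/-- Restriction (substitution) of a form to the linear subspace parametrized by `A`. -/
noncomputable def restrictTo {k : ℕ} (A : Matrix (Fin (n + 1)) (Fin k) ℂ)
    (F : MvPolynomial (Fin (n + 1)) ℂ) : MvPolynomial (Fin k) ℂ :=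
  MvPolynomial.aeval (fun j => ∑ b, MvPolynomial.C (A j b) * MvPolynomial.X b) F

/-- `X` contains no line of `ℙⁿ`. -/
def ContainsNoLine (F : Fin m → MvPolynomial (Fin (n + 1)) ℂ) : Prop :=
  ¬∃ A : Matrix (Fin (n + 1)) (Fin 2) ℂ, Function.Injective A.mulVec ∧
    ∀ w : Fin 2 → ℂ, A.mulVec w ∈ coneX F

/-- `X` contains no plane conic of `ℙⁿ` (no 2-plane contains a conic lying on `X`). -/
def ContainsNoConic (F : Fin m → MvPolynomial (Fin (n + 1)) ℂ) : Prop :=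
  ¬∃ A : Matrix (Fin (n + 1)) (Fin 3) ℂ, Function.Injective A.mulVec ∧
    ∃ q : MvPolynomial (Fin 3) ℂ, q.IsHomogeneous 2 ∧ q ≠ 0 ∧
      ∀ w : Fin 3 → ℂ, MvPolynomial.eval w q = 0 → A.mulVec w ∈ coneX F

/-- Hilbert function of the homogeneous coordinate ring of the intersection of `X` with
the plane parametrized by `A`. -/
noncomputable def planeHilbertFn (F : Fin m → MvPolynomial (Fin (n + 1)) ℂ)
    (A : Matrix (Fin (n + 1)) (Fin 3) ℂ) (k : ℕ) : ℕ :=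
  Module.finrank ℂ
    (↥(homogeneousSubmodule (Fin 3) ℂ k) ⧸
      (Submodule.comap (homogeneousSubmodule (Fin 3) ℂ k).subtype
        ((Ideal.span (Set.range (fun i => restrictTo A (F i)))).restrictScalars ℂ)))


noncomputable section AuxKill

abbrev S3 : Type := MvPolynomial (Fin 3) ℂ

/-- The algebra endomorphism killing the variable `i`. -/
noncomputable def kill (i : Fin 3) : S3 →ₐ[ℂ] S3 :=
  aeval (fun j => if j = i then 0 else X j)

@[simp] lemma kill_X_self (i : Fin 3) : kill i (X i) = 0 := by simp [kill]

lemma kill_X_ne {i j : Fin 3} (h : j ≠ i) : kill i (X j) = X j := by simp [kill, h]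

lemma dvd_sub_kill (i : Fin 3) (p : S3) : X i ∣ p - kill i p := by
  induction p using MvPolynomial.induction_on with
  | C a => simp [kill]
  | add p q hp hq =>
      have : p + q - kill i (p + q) = (p - kill i p) + (q - kill i q) := by
        rw [map_add]; ring
      rw [this]; exact dvd_add hp hq
  | mul_X p j hp =>
      by_cases hj : j = i
      · subst hj
        have : p * X j - kill j (p * X j) = p * X j := by simp
        rw [this]; exact Dvd.intro_left p rfl
      · have : p * X j - kill i (p * X j) = (p - kill i p) * X j := by
          rw [map_mul, kill_X_ne hj]; ring
        rw [this]; exact Dvd.dvd.mul_right hp _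

lemma X_dvd_of_kill_eq_zero {i : Fin 3} {p : S3} (h : kill i p = 0) : X i ∣ p := by
  have := dvd_sub_kill i p
  rwa [h, sub_zero] at this

lemma kill_eq_zero_of_dvd {i : Fin 3} {p : S3} (h : X i ∣ p) : kill i p = 0 := by
  obtain ⟨t, rfl⟩ := h
  rw [map_mul, kill_X_self, zero_mul]

lemma kill_eq_zero_iff {i : Fin 3} {p : S3} : kill i p = 0 ↔ X i ∣ p :=
  ⟨X_dvd_of_kill_eq_zero, kill_eq_zero_of_dvd⟩

lemma kill_idem (i : Fin 3) (p : S3) : kill i (kill i p) = kill i p := by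
  obtain ⟨t, ht⟩ := dvd_sub_kill i p
  have : kill i (p - kill i p) = kill i (X i * t) := by rw [ht]
  rw [map_sub, map_mul, kill_X_self, zero_mul, sub_eq_zero] at this
  exact this.symm

lemma prime_X3 (i : Fin 3) : Prime (X i : S3) := by
  constructor
  · exact X_ne_zero i
  constructor
  · intro hu
    have h1 : (X i : S3) ∣ 1 := hu.dvd
    have := kill_eq_zero_of_dvd h1
    rw [map_one] at this
    exact one_ne_zero this
  · intro a b hab
    have h0 := kill_eq_zero_of_dvd hab
    rw [map_mul] at h0
    rcases mul_eq_zero.mp h0 with h | h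
    · exact Or.inl (X_dvd_of_kill_eq_zero h)
    · exact Or.inr (X_dvd_of_kill_eq_zero h)

lemma not_X_dvd_X {i j : Fin 3} (h : j ≠ i) : ¬ (X i : S3) ∣ X j := by
  intro hd
  have := kill_eq_zero_of_dvd hd
  rw [kill_X_ne h] at this
  exact X_ne_zero j this

end AuxKill

section AuxHomog

lemma Finsupp.degree_add' (u v : Fin 3 →₀ ℕ) : (u + v).degree = u.degree + v.degree := by
  simp only [Finsupp.degree_eq_weight_one, map_add]

lemma isHomog_support_iff {φ : S3} {n : ℕ} :
    φ.IsHomogeneous n ↔ ∀ d ∈ φ.support, d.degree = n := by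
  constructor
  · intro h d hd
    rw [Finsupp.degree_eq_weight_one]
    exact h (mem_support_iff.mp hd)
  · intro h d hd
    have := h d (mem_support_iff.mpr hd)
    rw [Finsupp.degree_eq_weight_one] at this
    exact this

lemma homogComp_self {φ : S3} {n : ℕ} (h : φ.IsHomogeneous n) :
    homogeneousComponent n φ = φ := by
  apply MvPolynomial.ext
  intro d
  rw [coeff_homogeneousComponent]
  by_cases hd : d.degree = n
  · simp [hd]
  · simp only [hd, if_false]
    exact (h.coeff_eq_zero hd).symm

lemma homogComp_eq_zero' {φ : S3} {n t : ℕ} (h : φ.IsHomogeneous n) (ht : t ≠ n) :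
    homogeneousComponent t φ = 0 := by
  apply MvPolynomial.ext
  intro d
  rw [coeff_homogeneousComponent, coeff_zero]
  by_cases hd : d.degree = t
  · simp only [hd, if_true]
    exact h.coeff_eq_zero (by omega)
  · simp [hd]

lemma homogComp_mul_of_le {g h : S3} {bg bh : ℕ}
    (hg : ∀ d ∈ g.support, bg ≤ d.degree) (hh : ∀ d ∈ h.support, bh ≤ d.degree) :
    homogeneousComponent (bg + bh) (g * h) =
      homogeneousComponent bg g * homogeneousComponent bh h := by
  apply MvPolynomial.ext
  intro d
  rw [coeff_homogeneousComponent, coeff_mul, coeff_mul]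
  by_cases hd : d.degree = bg + bh
  · rw [if_pos hd]
    apply Finset.sum_congr rfl
    rintro ⟨u, v⟩ huv
    have huvd : u + v = d := Finset.HasAntidiagonal.mem_antidiagonal.mp huv
    have hdeg : u.degree + v.degree = bg + bh := by
      rw [← Finsupp.degree_add' u v, huvd, hd]
    rw [coeff_homogeneousComponent, coeff_homogeneousComponent]
    by_cases hu : u.degree = bg
    · have hv : v.degree = bh := by omega
      rw [if_pos hu, if_pos hv]
    · by_cases hcu : coeff u g = 0
      · simp [hcu, hu]
      · have h1 : bg ≤ u.degree := hg u (mem_support_iff.mpr hcu)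
        have hcv : coeff v h = 0 := by
          by_contra hcv
          have := hh v (mem_support_iff.mpr hcv)
          omega
        simp [hcv, hu]
  · rw [if_neg hd]
    symm
    apply Finset.sum_eq_zero
    rintro ⟨u, v⟩ huv
    have huvd : u + v = d := Finset.HasAntidiagonal.mem_antidiagonal.mp huv
    rw [coeff_homogeneousComponent, coeff_homogeneousComponent]
    by_cases hu : u.degree = bg
    · by_cases hv : v.degree = bh
      · exfalso
        apply hd
        rw [← huvd, Finsupp.degree_add', hu, hv]
      · simp [hv]
    · simp [hu]

lemma homogComp_mul_of_ge {g h : S3} {bg bh : ℕ}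
    (hg : ∀ d ∈ g.support, d.degree ≤ bg) (hh : ∀ d ∈ h.support, d.degree ≤ bh) :
    homogeneousComponent (bg + bh) (g * h) =
      homogeneousComponent bg g * homogeneousComponent bh h := by
  apply MvPolynomial.ext
  intro d
  rw [coeff_homogeneousComponent, coeff_mul, coeff_mul]
  by_cases hd : d.degree = bg + bh
  · rw [if_pos hd]
    apply Finset.sum_congr rfl
    rintro ⟨u, v⟩ huv
    have huvd : u + v = d := Finset.HasAntidiagonal.mem_antidiagonal.mp huv
    have hdeg : u.degree + v.degree = bg + bh := by
      rw [← Finsupp.degree_add' u v, huvd, hd]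
    rw [coeff_homogeneousComponent, coeff_homogeneousComponent]
    by_cases hu : u.degree = bg
    · have hv : v.degree = bh := by omega
      rw [if_pos hu, if_pos hv]
    · by_cases hcu : coeff u g = 0
      · simp [hcu, hu]
      · have h1 : u.degree ≤ bg := hg u (mem_support_iff.mpr hcu)
        have hcv : coeff v h = 0 := by
          by_contra hcv
          have := hh v (mem_support_iff.mpr hcv)
          omega
        simp [hcv, hu]
  · rw [if_neg hd]
    symm
    apply Finset.sum_eq_zero
    rintro ⟨u, v⟩ huv
    have huvd : u + v = d := Finset.HasAntidiagonal.mem_antidiagonal.mp huv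
    rw [coeff_homogeneousComponent, coeff_homogeneousComponent]
    by_cases hu : u.degree = bg
    · by_cases hv : v.degree = bh
      · exfalso
        apply hd
        rw [← huvd, Finsupp.degree_add', hu, hv]
      · simp [hv]
    · simp [hu]

/-- In a domain, factors of a nonzero homogeneous polynomial are homogeneous. -/
lemma homog_of_mul {g h : S3} {n : ℕ} (hgh : (g * h).IsHomogeneous n)
    (hg : g ≠ 0) (hh : h ≠ 0) :
    g.IsHomogeneous g.totalDegree ∧ h.IsHomogeneous h.totalDegree ∧
      g.totalDegree + h.totalDegree = n := by
  classical
  have hgs : g.support.Nonempty := support_nonempty.mpr hg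
  have hhs : h.support.Nonempty := support_nonempty.mpr hh
  set Dg := g.support.image Finsupp.degree with hDg
  set Dh := h.support.image Finsupp.degree with hDh
  have hDgne : Dg.Nonempty := hgs.image _
  have hDhne : Dh.Nonempty := hhs.image _
  set bg := Dg.min' hDgne
  set Bg := Dg.max' hDgne
  set bh := Dh.min' hDhne
  set Bh := Dh.max' hDhne
  have hbgle : ∀ d ∈ g.support, bg ≤ d.degree := fun d hd =>
    Finset.min'_le _ _ (Finset.mem_image_of_mem _ hd)
  have hbhle : ∀ d ∈ h.support, bh ≤ d.degree := fun d hd =>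
    Finset.min'_le _ _ (Finset.mem_image_of_mem _ hd)
  have hBgle : ∀ d ∈ g.support, d.degree ≤ Bg := fun d hd =>
    Finset.le_max' _ _ (Finset.mem_image_of_mem _ hd)
  have hBhle : ∀ d ∈ h.support, d.degree ≤ Bh := fun d hd =>
    Finset.le_max' _ _ (Finset.mem_image_of_mem _ hd)
  -- the extremal components are nonzero
  have compne : ∀ (t : ℕ), t ∈ Dg → homogeneousComponent t g ≠ 0 := by
    intro t ht
    obtain ⟨d, hd, hdt⟩ := Finset.mem_image.mp ht
    intro h0
    have := coeff_homogeneousComponent (σ := Fin 3) (R := ℂ) t g d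
    rw [h0, coeff_zero, if_pos hdt] at this
    exact (mem_support_iff.mp hd) this.symm
  have compne' : ∀ (t : ℕ), t ∈ Dh → homogeneousComponent t h ≠ 0 := by
    intro t ht
    obtain ⟨d, hd, hdt⟩ := Finset.mem_image.mp ht
    intro h0
    have := coeff_homogeneousComponent (σ := Fin 3) (R := ℂ) t h d
    rw [h0, coeff_zero, if_pos hdt] at this
    exact (mem_support_iff.mp hd) this.symm
  have hmin : homogeneousComponent (bg + bh) (g * h) ≠ 0 := by
    rw [homogComp_mul_of_le hbgle hbhle]
    exact mul_ne_zero (compne _ (Finset.min'_mem _ _)) (compne' _ (Finset.min'_mem _ _))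
  have hmax : homogeneousComponent (Bg + Bh) (g * h) ≠ 0 := by
    rw [homogComp_mul_of_ge hBgle hBhle]
    exact mul_ne_zero (compne _ (Finset.max'_mem _ _)) (compne' _ (Finset.max'_mem _ _))
  have hbn : bg + bh = n := by
    by_contra hne
    exact hmin (homogComp_eq_zero' hgh hne)
  have hBn : Bg + Bh = n := by
    by_contra hne
    exact hmax (homogComp_eq_zero' hgh hne)
  have hb : bg ≤ Bg := Finset.min'_le _ _ (Finset.max'_mem _ _)
  have hb' : bh ≤ Bh := Finset.min'_le _ _ (Finset.max'_mem _ _)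
  have hgB : bg = Bg := by omega
  have hhB : bh = Bh := by omega
  have hghom : g.IsHomogeneous bg := by
    rw [isHomog_support_iff]
    intro d hd
    have := hbgle d hd
    have := hBgle d hd
    omega
  have hhhom : h.IsHomogeneous bh := by
    rw [isHomog_support_iff]
    intro d hd
    have := hbhle d hd
    have := hBhle d hd
    omega
  have htg : g.totalDegree = bg := hghom.totalDegree hg
  have hth : h.totalDegree = bh := hhhom.totalDegree hh
  refine ⟨htg ▸ hghom, hth ▸ hhhom, by omega⟩

lemma not_unit_of_homog {φ : S3} {n : ℕ} (hφ : φ.IsHomogeneous n) (h0 : φ ≠ 0)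
    (hn : n ≠ 0) : ¬ IsUnit φ := by
  intro hu
  obtain ⟨t, ht⟩ := hu.exists_right_inv
  have ht0 : t ≠ 0 := by
    intro h; rw [h, mul_zero] at ht; exact one_ne_zero ht.symm
  have h1 : (φ * t).IsHomogeneous 0 := by rw [ht]; exact isHomogeneous_one _ _
  obtain ⟨hφ', -, hsum⟩ := homog_of_mul h1 h0 ht0
  have := hφ.totalDegree h0
  omega

lemma homog_zero_eq_C {φ : S3} (h : φ.IsHomogeneous 0) : φ = C (coeff 0 φ) := by
  apply MvPolynomial.ext
  intro d
  by_cases hd : d = 0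
  · subst hd; simp
  · rw [coeff_C, if_neg (Ne.symm hd)]
    apply h.coeff_eq_zero
    rw [Ne, Finsupp.degree_eq_zero_iff]
    exact hd

end AuxHomog

section AuxSpanPair

lemma homogComp_mul_homog {u Q : S3} {t n : ℕ} (hQ : Q.IsHomogeneous n) :
    homogeneousComponent (t + n) (u * Q) = homogeneousComponent t u * Q := by
  classical
  conv_lhs => rw [← sum_homogeneousComponent u]
  rw [Finset.sum_mul, map_sum]
  by_cases ht : t ≤ u.totalDegree
  · rw [Finset.sum_eq_single t]
    · exact homogComp_self ((homogeneousComponent_isHomogeneous t u).mul hQ)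
    · intro i _ hit
      exact homogComp_eq_zero' ((homogeneousComponent_isHomogeneous i u).mul hQ)
        (by omega)
    · intro habs
      exact absurd (Finset.mem_range.mpr (by omega)) habs
  · have h1 : homogeneousComponent t u = 0 :=
      homogeneousComponent_eq_zero t u (by omega)
    rw [h1, zero_mul]
    apply Finset.sum_eq_zero
    intro i hi
    have : i ≤ u.totalDegree := by
      have := Finset.mem_range.mp hi; omega
    exact homogComp_eq_zero' ((homogeneousComponent_isHomogeneous i u).mul hQ)
      (by omega)

lemma mem_pair_quadric {Q1 Q2 p : S3} (hQ1 : Q1.IsHomogeneous 2) (hQ2 : Q2.IsHomogeneous 2)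
    (hp : p.IsHomogeneous 2) (hmem : p ∈ Ideal.span {Q1, Q2}) :
    p ∈ Submodule.span ℂ ({Q1, Q2} : Set S3) := by
  obtain ⟨u, v, huv⟩ := Ideal.mem_span_pair.mp hmem
  have h2 : p = homogeneousComponent 2 p := (homogComp_self hp).symm
  have h3 : p = C (coeff 0 u) * Q1 + C (coeff 0 v) * Q2 := by
    conv_lhs => rw [h2, ← huv]
    rw [show (2 : ℕ) = 0 + 2 from rfl, map_add, homogComp_mul_homog hQ1,
      homogComp_mul_homog hQ2, homogeneousComponent_zero, homogeneousComponent_zero]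
  exact Submodule.mem_span_pair.mpr ⟨coeff 0 u, coeff 0 v, by
    rw [smul_eq_C_mul, smul_eq_C_mul, h3]⟩

lemma sat_aux {Q1 Q2 g : S3} (hrel : IsRelPrime Q1 Q2) (hQ2 : Q2 ≠ 0)
    (hnd : ¬ (X 0 : S3) ∣ Q2)
    (h0 : X 0 * g ∈ Ideal.span {Q1, Q2})
    (h1 : X 1 * g ∈ Ideal.span {Q1, Q2})
    (h2 : X 2 * g ∈ Ideal.span {Q1, Q2}) : g ∈ Ideal.span {Q1, Q2} := by
  obtain ⟨a, b, hab⟩ := Ideal.mem_span_pair.mp h0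
  obtain ⟨c, d, hcd⟩ := Ideal.mem_span_pair.mp h1
  obtain ⟨e, f, hef⟩ := Ideal.mem_span_pair.mp h2
  -- first cross equation
  have key1 : (X 1 * a - X 0 * c) * Q1 = Q2 * (X 0 * d - X 1 * b) := by
    have : X 1 * (a * Q1 + b * Q2) = X 0 * (c * Q1 + d * Q2) := by
      rw [hab, hcd]; ring
    ring_nf
    ring_nf at this
    linear_combination this
  obtain ⟨h₁, hh₁⟩ : Q2 ∣ (X 1 * a - X 0 * c) :=
    hrel.symm.dvd_of_dvd_mul_right ⟨_, key1⟩
  have keyB1 : X 0 * d - X 1 * b = h₁ * Q1 := by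
    have := key1
    rw [hh₁] at this
    have h' : Q2 * (h₁ * Q1) = Q2 * (X 0 * d - X 1 * b) := by ring_nf; ring_nf at this; linear_combination this
    exact (mul_left_cancel₀ hQ2 h').symm
  -- second cross equation
  have key2 : (X 2 * a - X 0 * e) * Q1 = Q2 * (X 0 * f - X 2 * b) := by
    have : X 2 * (a * Q1 + b * Q2) = X 0 * (e * Q1 + f * Q2) := by
      rw [hab, hef]; ring
    linear_combination this
  obtain ⟨h₂, hh₂⟩ : Q2 ∣ (X 2 * a - X 0 * e) :=
    hrel.symm.dvd_of_dvd_mul_right ⟨_, key2⟩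
  -- apply kill 0
  have hk1 : X 1 * kill 0 a = kill 0 Q2 * kill 0 h₁ := by
    have := congrArg (kill 0) hh₁
    rw [map_sub, map_mul, map_mul, map_mul, kill_X_self, kill_X_ne (by decide),
      zero_mul, sub_zero] at this
    exact this
  have hk2 : X 2 * kill 0 a = kill 0 Q2 * kill 0 h₂ := by
    have := congrArg (kill 0) hh₂
    rw [map_sub, map_mul, map_mul, map_mul, kill_X_self, kill_X_ne (by decide),
      zero_mul, sub_zero] at this
    exact this
  have hQ2k : kill 0 Q2 ≠ 0 := fun hz => hnd (X_dvd_of_kill_eq_zero hz)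
  have hcross : kill 0 Q2 * (X 2 * kill 0 h₁) = kill 0 Q2 * (X 1 * kill 0 h₂) := by
    have : X 2 * (X 1 * kill 0 a) = X 1 * (X 2 * kill 0 a) := by ring
    rw [hk1, hk2] at this
    linear_combination this
  have hcross' : X 2 * kill 0 h₁ = X 1 * kill 0 h₂ := mul_left_cancel₀ hQ2k hcross
  obtain ⟨w, hw⟩ : (X 1 : S3) ∣ kill 0 h₁ := by
    rcases (prime_X3 1).2.2 _ _ ⟨_, hcross'⟩ with h | h
    · exact absurd h (not_X_dvd_X (by decide))
    · exact h
  have hww : kill 0 w = w := by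
    have := congrArg (kill 0) hw
    rw [kill_idem, map_mul, kill_X_ne (by decide)] at this
    rw [hw] at this
    exact (mul_left_cancel₀ (X_ne_zero 1) this.symm)
  have hka : kill 0 a = kill 0 Q2 * w := by
    have : X 1 * kill 0 a = X 1 * (kill 0 Q2 * w) := by
      rw [hk1, hw]; ring
    exact mul_left_cancel₀ (X_ne_zero 1) this
  -- modified representation
  set a' := a - w * Q2 with ha'
  set b' := b + w * Q1 with hb'
  have hka' : kill 0 a' = 0 := by
    rw [ha', map_sub, map_mul, hka, hww]
    ring
  obtain ⟨a₂, ha₂⟩ : (X 0 : S3) ∣ a' := X_dvd_of_kill_eq_zero hka'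
  have hrepr : a' * Q1 + b' * Q2 = X 0 * g := by rw [ha', hb', ← hab]; ring
  obtain ⟨b₂, hb₂⟩ : (X 0 : S3) ∣ b' := by
    have hdv : (X 0 : S3) ∣ b' * Q2 := by
      have : b' * Q2 = X 0 * g - X 0 * a₂ * Q1 := by
        rw [← hrepr, ha₂]; ring
      rw [this]
      exact dvd_sub (Dvd.intro _ rfl) ⟨a₂ * Q1, by ring⟩
    rcases (prime_X3 0).2.2 _ _ hdv with h | h
    · exact h
    · exact absurd h hnd
  have : X 0 * g = X 0 * (a₂ * Q1 + b₂ * Q2) := by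
    rw [← hrepr, ha₂, hb₂]; ring
  have hg : g = a₂ * Q1 + b₂ * Q2 := mul_left_cancel₀ (X_ne_zero 0) this
  exact Ideal.mem_span_pair.mpr ⟨a₂, b₂, hg.symm⟩

lemma sat {Q1 Q2 g : S3} (hrel : IsRelPrime Q1 Q2) (hQ1 : Q1 ≠ 0) (hQ2 : Q2 ≠ 0)
    (h : ∀ i : Fin 3, X i * g ∈ Ideal.span {Q1, Q2}) : g ∈ Ideal.span {Q1, Q2} := by
  by_cases hnd : (X 0 : S3) ∣ Q2
  · have hnd1 : ¬ (X 0 : S3) ∣ Q1 := by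
      intro hd1
      exact (prime_X3 0).not_unit (hrel hd1 hnd)
    have hsw : ({Q1, Q2} : Set S3) = {Q2, Q1} := Set.pair_comm _ _
    rw [show ({Q1, Q2} : Set S3) = {Q2, Q1} from hsw]
    exact sat_aux hrel.symm hQ1 hnd1
      (by rw [← hsw]; exact h 0) (by rw [← hsw]; exact h 1) (by rw [← hsw]; exact h 2)
  · exact sat_aux hrel hQ2 hnd (h 0) (h 1) (h 2)

lemma degree_single' (i : Fin 3) (n : ℕ) : (Finsupp.single i n).degree = n := by
  by_cases hn : n = 0
  · subst hn; simp [Finsupp.degree]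
  · rw [Finsupp.degree_apply, Finsupp.support_single_ne_zero _ hn]
    simp

lemma exists_monomial_mul_not_mem {Q1 Q2 g : S3} (hrel : IsRelPrime Q1 Q2)
    (hQ1 : Q1 ≠ 0) (hQ2 : Q2 ≠ 0) (hg : g ∉ Ideal.span {Q1, Q2}) (k : ℕ) :
    ∃ u : Fin 3 →₀ ℕ, u.degree = k ∧ (monomial u 1) * g ∉ Ideal.span {Q1, Q2} := by
  induction k with
  | zero =>
      refine ⟨0, map_zero _, ?_⟩
      rw [monomial_zero', C_1, one_mul]
      exact hg
  | succ k ih =>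
      obtain ⟨u, hu, hnot⟩ := ih
      have : ¬ ∀ i : Fin 3, X i * ((monomial u 1) * g) ∈ Ideal.span {Q1, Q2} := by
        intro hall
        exact hnot (sat hrel hQ1 hQ2 hall)
      push_neg at this
      obtain ⟨i, hi⟩ := this
      refine ⟨u + Finsupp.single i 1, ?_, ?_⟩
      · rw [Finsupp.degree_add', hu, degree_single']
      · intro hmem
        apply hi
        have heq : X i * ((monomial u 1) * g) = (monomial (u + Finsupp.single i 1) (1:ℂ)) * g := by
          rw [show (X i : S3) = monomial (Finsupp.single i 1) 1 from rfl,
            ← mul_assoc, monomial_mul, one_mul, add_comm]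
        rw [heq]
        exact hmem

end AuxSpanPair

section AuxAvoid

lemma avoid {m : ℕ} (q : Fin m → S3) (P : Finset S3) (hP : ∀ p ∈ P, Prime p)
    (hex : ∀ p ∈ P, ∃ i, ¬ p ∣ q i) :
    ∃ d : Fin m → ℂ, ∀ p ∈ P, ¬ p ∣ ∑ i, C (d i) * q i := by
  classical
  induction P using Finset.cons_induction with
  | empty => exact ⟨0, by simp⟩
  | cons p₀ P' hp₀ ih =>
      obtain ⟨d', hd'⟩ := ih (fun p hp => hP p (Finset.mem_cons_of_mem hp))
        (fun p hp => hex p (Finset.mem_cons_of_mem hp))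
      obtain ⟨i0, hi0⟩ := hex p₀ (Finset.mem_cons_self _ _)
      set v' := ∑ i, C (d' i) * q i with hv'
      set Bad : S3 → Set ℂ := fun p => {lam : ℂ | p ∣ v' + C lam * q i0} with hBad
      have hsub : ∀ p ∈ Finset.cons p₀ P' hp₀, (Bad p).Subsingleton := by
        intro p hp lam hlam mu hmu
        by_contra hne
        have hdq : p ∣ q i0 := by
          have hd : p ∣ (C lam - C mu) * q i0 := by
            have : (C lam - C mu) * q i0 =
                (v' + C lam * q i0) - (v' + C mu * q i0) := by ring
            rw [this]
            exact dvd_sub hlam hmu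
          have hunit : IsUnit (C lam - C mu : S3) := by
            rw [← map_sub]
            refine isUnit_iff_exists_inv.mpr ⟨C (lam - mu)⁻¹, ?_⟩
            rw [← map_mul, mul_inv_cancel₀ (sub_ne_zero.mpr hne), map_one]
          obtain ⟨uu, huu⟩ := hunit.exists_left_inv
          have : q i0 = uu * ((C lam - C mu) * q i0) := by
            rw [← mul_assoc, huu, one_mul]
          rw [this]
          exact Dvd.dvd.mul_left hd uu
        rcases Finset.mem_cons.mp hp with rfl | hp'
        · exact hi0 hdq
        · apply hd' p hp'
          have : (v' : S3) = (v' + C lam * q i0) - C lam * q i0 := by ring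
          rw [hv', ← hv', this]
          exact dvd_sub hlam (Dvd.dvd.mul_left hdq _)
      have hfin : (⋃ p ∈ Finset.cons p₀ P' hp₀, Bad p).Finite :=
        Set.Finite.biUnion (Finset.finite_toSet _)
          (fun p hp => Set.Subsingleton.finite (hsub p hp))
      obtain ⟨lam₀, hlam₀⟩ := hfin.exists_notMem
      refine ⟨fun i => d' i + (if i = i0 then lam₀ else 0), ?_⟩
      have hterm : ∀ i : Fin m, C (d' i + (if i = i0 then lam₀ else 0)) * q i
          = C (d' i) * q i + (if i = i0 then C lam₀ * q i else 0) := by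
        intro i
        by_cases hii : i = i0
        · subst hii; simp [map_add]; ring
        · simp [hii]
      have hsum : ∑ i, C (d' i + (if i = i0 then lam₀ else 0)) * q i
          = v' + C lam₀ * q i0 := by
        rw [Finset.sum_congr rfl (fun i _ => hterm i), Finset.sum_add_distrib,
          Finset.sum_ite_eq' Finset.univ i0 (fun i => C lam₀ * q i)]
        simp [hv']
      rw [hsum]
      intro p hp hdvd
      exact hlam₀ (Set.mem_biUnion hp hdvd)

end AuxAvoid

section AuxDim

/-- Index type for monomials of degree `j` in 3 variables. -/
def TIdx (j : ℕ) : Type := Σ a : Fin (j + 1), Fin (j + 1 - a.1)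

instance (j : ℕ) : Fintype (TIdx j) := by unfold TIdx; infer_instance

/-- The exponent vector associated to an index. -/
noncomputable def dOf {j : ℕ} (t : TIdx j) : Fin 3 →₀ ℕ :=
  Finsupp.equivFunOnFinite.symm ![t.1.1, t.2.1, j - t.1.1 - t.2.1]

lemma dOf_apply {j : ℕ} (t : TIdx j) :
    dOf t 0 = t.1.1 ∧ dOf t 1 = t.2.1 ∧ dOf t 2 = j - t.1.1 - t.2.1 := by
  refine ⟨?_, ?_, ?_⟩ <;> simp [dOf]

lemma degree_eq_sum_univ (d : Fin 3 →₀ ℕ) : d.degree = ∑ i : Fin 3, d i := by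
  rw [Finsupp.degree]
  apply Finset.sum_subset (Finset.subset_univ _)
  intro i _ hi
  exact Finsupp.notMem_support_iff.mp hi

lemma dOf_degree {j : ℕ} (t : TIdx j) : (dOf t).degree = j := by
  obtain ⟨h0, h1, h2⟩ := dOf_apply t
  rw [degree_eq_sum_univ, Fin.sum_univ_three, h0, h1, h2]
  have ha : t.1.1 < j + 1 := t.1.2
  have hb : t.2.1 < j + 1 - t.1.1 := t.2.2
  omega

lemma dOf_injective {j : ℕ} : Function.Injective (dOf (j := j)) := by
  rintro ⟨a, b⟩ ⟨a', b'⟩ h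
  obtain ⟨h0, h1, -⟩ := dOf_apply (j := j) ⟨a, b⟩
  obtain ⟨h0', h1', -⟩ := dOf_apply (j := j) ⟨a', b'⟩
  have ha : a.1 = a'.1 := by rw [← h0, ← h0', h]
  have haa : a = a' := Fin.ext ha
  subst haa
  have hb : b.1 = b'.1 := by rw [← h1, ← h1', h]
  have hbb : b = b' := Fin.ext hb
  subst hbb
  rfl

lemma dOf_surjective {j : ℕ} (d : Fin 3 →₀ ℕ) (hd : d.degree = j) :
    ∃ t : TIdx j, dOf t = d := by
  have hsum : d 0 + d 1 + d 2 = j := by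
    rw [← hd, degree_eq_sum_univ, Fin.sum_univ_three]
  refine ⟨⟨⟨d 0, by omega⟩, ⟨d 1, by show d 1 < j + 1 - d 0; omega⟩⟩, ?_⟩
  obtain ⟨h0, h1, h2⟩ := dOf_apply (j := j)
    ⟨⟨d 0, by omega⟩, ⟨d 1, by show d 1 < j + 1 - d 0; omega⟩⟩
  apply Finsupp.ext
  intro i
  fin_cases i
  · exact h0
  · exact h1
  · refine h2.trans ?_
    show j - d 0 - d 1 = d 2
    omega

/-- Linear equivalence between the degree-`j` homogeneous component and functions
on the monomial index set. -/
noncomputable def EH (j : ℕ) :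
    (homogeneousSubmodule (Fin 3) ℂ j) ≃ₗ[ℂ] (TIdx j → ℂ) where
  toFun p t := coeff (dOf t) p.1
  map_add' p q := by funext t; simp
  map_smul' c p := by funext t; simp
  invFun f := ⟨∑ t : TIdx j, monomial (dOf t) (f t),
    Submodule.sum_mem _ (fun t _ => isHomogeneous_monomial _ (dOf_degree t))⟩
  left_inv p := by
    apply Subtype.ext
    show ∑ t : TIdx j, monomial (dOf t) (coeff (dOf t) p.1) = p.1
    apply MvPolynomial.ext
    intro d
    rw [coeff_sum]
    by_cases hd : d.degree = j
    · obtain ⟨t₀, ht₀⟩ := dOf_surjective d hd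
      rw [Finset.sum_eq_single t₀]
      · rw [coeff_monomial, if_pos ht₀, ht₀]
      · intro t _ htne
        rw [coeff_monomial, if_neg]
        intro heq
        exact htne (dOf_injective (ht₀ ▸ heq))
      · intro habs
        exact absurd (Finset.mem_univ t₀) habs
    · rw [show coeff d p.1 = 0 from
        ((mem_homogeneousSubmodule j p.1).mp p.2).coeff_eq_zero hd]
      apply Finset.sum_eq_zero
      intro t _
      rw [coeff_monomial, if_neg]
      intro heq
      exact hd (heq ▸ dOf_degree t)
  right_inv f := by
    funext t
    show coeff (dOf t) (∑ s : TIdx j, monomial (dOf s) (f s)) = f t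
    rw [coeff_sum, Finset.sum_eq_single t]
    · rw [coeff_monomial, if_pos rfl]
    · intro s _ hsne
      rw [coeff_monomial, if_neg (fun heq => hsne (dOf_injective heq))]
    · intro habs
      exact absurd (Finset.mem_univ t) habs

instance homogFD (j : ℕ) : FiniteDimensional ℂ (homogeneousSubmodule (Fin 3) ℂ j) :=
  Module.Finite.equiv (EH j).symm

lemma two_mul_finrank_H (j : ℕ) :
    2 * Module.finrank ℂ (homogeneousSubmodule (Fin 3) ℂ j) = (j + 1) * (j + 2) := by
  have h1 : Module.finrank ℂ (homogeneousSubmodule (Fin 3) ℂ j)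
      = Fintype.card (TIdx j) := by
    rw [(EH j).finrank_eq, Module.finrank_pi]
  have h2 : Fintype.card (TIdx j) = ∑ a : Fin (j + 1), (j + 1 - a.1) := by
    rw [show Fintype.card (TIdx j) = ∑ a : Fin (j+1), Fintype.card (Fin (j + 1 - a.1))
      from Fintype.card_sigma]
    simp
  have h3 : ∑ a : Fin (j + 1), (j + 1 - a.1) = ∑ i ∈ Finset.range (j + 1), (j + 1 - i) :=
    Fin.sum_univ_eq_sum_range _ _
  have h4 : ∑ i ∈ Finset.range (j + 1), (j + 1 - i) = ∑ i ∈ Finset.range (j + 1), (i + 1) := by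
    rw [← Finset.sum_range_reflect]
    apply Finset.sum_congr rfl
    intro i hi
    have := Finset.mem_range.mp hi
    omega
  have h5 : ∑ i ∈ Finset.range (j + 1), (i + 1)
      = (∑ i ∈ Finset.range (j + 1), i) + (j + 1) := by
    rw [Finset.sum_add_distrib, Finset.sum_const, Finset.card_range, smul_eq_mul, mul_one]
  have h6 : (∑ i ∈ Finset.range (j + 1), i) * 2 = (j + 1) * j := by
    rw [Finset.sum_range_id_mul_two (j + 1), Nat.add_sub_cancel]
  rw [h1, h2, h3, h4, h5]
  calc 2 * ((∑ i ∈ Finset.range (j + 1), i) + (j + 1))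
      = (∑ i ∈ Finset.range (j + 1), i) * 2 + 2 * (j + 1) := by ring
    _ = (j + 1) * j + 2 * (j + 1) := by rw [h6]
    _ = (j + 1) * (j + 2) := by ring

end AuxDim

section Restrict

lemma eval_restrictTo (A : Matrix (Fin (n + 1)) (Fin 3) ℂ)
    (P : MvPolynomial (Fin (n + 1)) ℂ) (w : Fin 3 → ℂ) :
    eval w (restrictTo A P) = eval (A.mulVec w) P := by
  induction P using MvPolynomial.induction_on with
  | C a => simp [restrictTo]
  | add p q hp hq =>
      simp only [restrictTo, map_add] at *
      rw [hp, hq]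
  | mul_X p j hp =>
      simp only [restrictTo, map_mul, aeval_X, eval_X] at *
      rw [hp]
      congr 1
      simp [Matrix.mulVec, dotProduct, eval_sum]

lemma restrict_homog (A : Matrix (Fin (n + 1)) (Fin 3) ℂ)
    {P : MvPolynomial (Fin (n + 1)) ℂ} {d : ℕ} (h : P.IsHomogeneous d) :
    (restrictTo A P).IsHomogeneous d := by
  have := h.aeval (fun j => ∑ b, C (A j b) * X b)
    (fun j => IsHomogeneous.sum _ _ 1 (fun b _ => isHomogeneous_C_mul_X _ _))
  rwa [one_mul] at this

/-- Linear syzygies of the restricted system. -/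
def LSyz {m : ℕ} (q : Fin m → S3) : Set (Fin m → S3) :=
  {a | (∀ l, (a l).IsHomogeneous 1) ∧ ∑ l, a l * q l = 0}

lemma koszul_restrict (A : Matrix (Fin (n + 1)) (Fin 3) ℂ)
    (F : Fin m → MvPolynomial (Fin (n + 1)) ℂ) (hK : SatisfiesK F) (i j : Fin m) :
    Pi.single i (restrictTo A (F j)) - Pi.single j (restrictTo A (F i)) ∈
      Submodule.span S3 (LSyz (fun l => restrictTo A (F l))) := by
  have h := hK i j
  have key : ∀ v ∈ Submodule.span (MvPolynomial (Fin (n + 1)) ℂ) (LinearSyzygies F),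
      (fun l => restrictTo A (v l)) ∈
        Submodule.span S3 (LSyz (fun l => restrictTo A (F l))) := by
    intro v hv
    induction hv using Submodule.span_induction with
    | mem x hx =>
        apply Submodule.subset_span
        refine ⟨fun l => restrict_homog A (hx.1 l), ?_⟩
        have : ∑ l, restrictTo A (x l) * restrictTo A (F l)
            = restrictTo A (∑ l, x l * F l) := by
          rw [show restrictTo A (∑ l, x l * F l)
            = MvPolynomial.aeval (fun j => ∑ b, C (A j b) * X b) (∑ l, x l * F l) from rfl,
            map_sum]
          apply Finset.sum_congr rfl
          intro l _
          rw [map_mul]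
          rfl
        rw [this, hx.2]
        rfl
    | zero =>
        have : (fun l => restrictTo A ((0 : Fin m → MvPolynomial (Fin (n + 1)) ℂ) l))
            = (0 : Fin m → S3) := by
          funext l
          show restrictTo A 0 = 0
          simp [restrictTo]
        rw [this]
        exact Submodule.zero_mem _
    | add x y hx hy ihx ihy =>
        have : (fun l => restrictTo A ((x + y) l))
            = (fun l => restrictTo A (x l)) + (fun l => restrictTo A (y l)) := by
          funext l
          show restrictTo A (x l + y l) = _
          simp only [restrictTo, map_add]
          rfl
        rw [this]
        exact Submodule.add_mem _ ihx ihy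
    | smul a x hx ihx =>
        have : (fun l => restrictTo A ((a • x) l))
            = restrictTo A a • (fun l => restrictTo A (x l)) := by
          funext l
          show restrictTo A (a * x l) = restrictTo A a * restrictTo A (x l)
          simp only [restrictTo, map_mul]
        rw [this]
        exact Submodule.smul_mem _ _ ihx
  have h2 := key _ h
  have : (fun l => restrictTo A ((Pi.single i (F j) - Pi.single j (F i) :
        Fin m → MvPolynomial (Fin (n + 1)) ℂ) l))
      = Pi.single i (restrictTo A (F j)) - Pi.single j (restrictTo A (F i)) := by
    funext l
    simp only [Pi.sub_apply, Pi.single_apply]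
    rw [show restrictTo A ((if l = i then F j else 0) - (if l = j then F i else 0))
        = restrictTo A (if l = i then F j else 0) - restrictTo A (if l = j then F i else 0)
      from map_sub (MvPolynomial.aeval _) _ _]
    congr 1 <;> split <;> simp [restrictTo]
  rw [← this]
  exact h2

end Restrict

section Koszul

lemma koszul_combo (q : Fin m → S3)
    (hsyz : ∀ i j : Fin m, Pi.single i (q j) - Pi.single j (q i) ∈
      Submodule.span S3 (LSyz q)) (c d : Fin m → ℂ) :
    (fun l => C (c l) * (∑ i, C (d i) * q i) - C (d l) * (∑ i, C (c i) * q i)) ∈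
      Submodule.span S3 (LSyz q) := by
  classical
  have hfun : (fun l => C (c l) * (∑ i, C (d i) * q i) - C (d l) * (∑ i, C (c i) * q i))
      = ∑ i, ∑ j, ((C (c i) * C (d j) : S3)) •
          (Pi.single i (q j) - Pi.single j (q i) : Fin m → S3) := by
    funext l
    rw [Finset.sum_apply]
    simp only [Finset.sum_apply, Pi.smul_apply, Pi.sub_apply, Pi.single_apply,
      smul_eq_mul]
    have hterm : ∀ i j : Fin m,
        C (c i) * C (d j) * ((if l = i then q j else 0) - (if l = j then q i else 0))
        = (if l = i then C (c i) * C (d j) * q j else 0)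
          - (if l = j then C (c i) * C (d j) * q i else 0) := by
      intro i j
      rw [mul_sub, mul_ite, mul_zero, mul_ite, mul_zero]
    rw [Finset.sum_congr rfl (fun i _ => Finset.sum_congr rfl (fun j _ => hterm i j))]
    rw [Finset.sum_congr rfl (fun i _ => Finset.sum_sub_distrib _ _), Finset.sum_sub_distrib]
    congr 1
    · -- ∑ i, ∑ j, ite (l = i) (C (c i) * C (d j) * q j) 0 = C (c l) * ∑ i, C (d i) * q i
      have hin : ∀ i : Fin m, (∑ j, if l = i then C (c i) * C (d j) * q j else 0)
          = if l = i then ∑ j, C (c i) * C (d j) * q j else 0 := by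
        intro i
        split <;> simp
      rw [Finset.sum_congr rfl (fun i _ => hin i)]
      rw [Finset.mul_sum]
      have := Finset.sum_ite_eq (Finset.univ : Finset (Fin m)) l
        (fun i => ∑ j, C (c i) * C (d j) * q j)
      simp only [Finset.mem_univ, if_true] at this
      have heq : ∀ i, (if l = i then ∑ j, C (c i) * C (d j) * q j else 0)
          = (if l = i then (fun i' => ∑ j, C (c i') * C (d j) * q j) i else 0) := by
        intro i; rfl
      rw [Finset.sum_congr rfl (fun i _ => heq i), this]
      apply Finset.sum_congr rfl
      intro j _
      ring
    · -- ∑ i, ∑ j, ite (l = j) (C (c i) * C (d j) * q i) 0 = C (d l) * ∑ i, C (c i) * q i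
      have hin : ∀ i : Fin m, (∑ j, if l = j then C (c i) * C (d j) * q i else 0)
          = C (c i) * C (d l) * q i := by
        intro i
        have := Finset.sum_ite_eq (Finset.univ : Finset (Fin m)) l
          (fun j => C (c i) * C (d j) * q i)
        simp only [Finset.mem_univ, if_true] at this
        exact this
      rw [Finset.sum_congr rfl (fun i _ => hin i)]
      rw [Finset.mul_sum]
      apply Finset.sum_congr rfl
      intro i _
      ring
  rw [hfun]
  exact Submodule.sum_mem _ (fun i _ => Submodule.sum_mem _ (fun j _ =>
    Submodule.smul_mem _ _ (hsyz i j)))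

lemma koszul_contra (q : Fin m → S3)
    (hsyz : ∀ i j : Fin m, Pi.single i (q j) - Pi.single j (q i) ∈
      Submodule.span S3 (LSyz q))
    (c d : Fin m → ℂ) (Q1 Q2 : S3)
    (hQ1 : Q1 = ∑ i, C (c i) * q i) (hQ2 : Q2 = ∑ i, C (d i) * q i)
    (hrel : IsRelPrime Q1 Q2)
    (hQ1h : Q1.IsHomogeneous 2) (hQ2h : Q2.IsHomogeneous 2)
    (hQ1ne : Q1 ≠ 0) (hQ2ne : Q2 ≠ 0)
    (hall : ∀ l, q l ∈ Submodule.span ℂ ({Q1, Q2} : Set S3)) : False := by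
  classical
  -- independence of Q1, Q2 over ℂ
  have indep : ∀ s t : ℂ, s • Q1 + t • Q2 = 0 → s = 0 ∧ t = 0 := by
    intro s t h
    by_cases ht : t = 0
    · subst ht
      rw [zero_smul, add_zero] at h
      rcases smul_eq_zero.mp h with hs | hQ
      · exact ⟨hs, rfl⟩
      · exact absurd hQ hQ1ne
    · exfalso
      have hdvd : Q1 ∣ Q2 := by
        have hb : t • Q2 = -(s • Q1) := by
          have : t • Q2 + s • Q1 = 0 := by rw [add_comm]; exact h
          exact eq_neg_of_add_eq_zero_left this
        have h2 : Q2 = (t⁻¹ * -s) • Q1 := by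
          rw [mul_smul, show (-s) • Q1 = -(s • Q1) from neg_smul s Q1, ← hb,
            inv_smul_smul₀ ht]
        refine ⟨C (t⁻¹ * -s), ?_⟩
        rw [h2, smul_eq_C_mul, mul_comm]
      exact not_unit_of_homog hQ1h hQ1ne (by norm_num) (hrel dvd_rfl hdvd)
  choose γ δ hγδ using fun l => Submodule.mem_span_pair.mp (hall l)
  -- the functional Φ kills the span of linear syzygies
  have hker : ∀ v ∈ Submodule.span S3 (LSyz q),
      (∑ l, C (γ l) * v l = 0 ∧ ∑ l, C (δ l) * v l = 0) := by
    intro v hv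
    induction hv using Submodule.span_induction with
    | mem a ha =>
        set u := ∑ l, C (γ l) * a l with hu
        set w := ∑ l, C (δ l) * a l with hw
        have hrel0 : u * Q1 + w * Q2 = 0 := by
          rw [hu, hw, Finset.sum_mul, Finset.sum_mul, ← Finset.sum_add_distrib]
          rw [← ha.2]
          apply Finset.sum_congr rfl
          intro l _
          have := hγδ l
          calc C (γ l) * a l * Q1 + C (δ l) * a l * Q2
              = a l * (γ l • Q1 + δ l • Q2) := by
                rw [smul_eq_C_mul, smul_eq_C_mul]; ring
            _ = a l * q l := by rw [this]
        have huh : u.IsHomogeneous 1 :=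
          IsHomogeneous.sum _ _ _ (fun l _ => (ha.1 l).C_mul _)
        have hwh : w.IsHomogeneous 1 :=
          IsHomogeneous.sum _ _ _ (fun l _ => (ha.1 l).C_mul _)
        have hu0 : u = 0 := by
          by_contra hune
          have hdvd : Q2 ∣ u := by
            apply hrel.symm.dvd_of_dvd_mul_right (y := u) (z := Q1)
            exact ⟨-w, by linear_combination hrel0⟩
          obtain ⟨t, ht⟩ := hdvd
          have htne : t ≠ 0 := by
            intro h0; rw [h0, mul_zero] at ht; exact hune ht
          have : (Q2 * t).IsHomogeneous 1 := ht ▸ huh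
          obtain ⟨-, -, hsum⟩ := homog_of_mul this hQ2ne htne
          have := hQ2h.totalDegree hQ2ne
          omega
        have hw0 : w = 0 := by
          rw [hu0, zero_mul, zero_add] at hrel0
          rcases mul_eq_zero.mp hrel0 with h | h
          · exact h
          · exact absurd h hQ2ne
        exact ⟨hu0, hw0⟩
    | zero => simp
    | add x y hx hy ihx ihy =>
        constructor
        · rw [show ∑ l, C (γ l) * (x + y) l = (∑ l, C (γ l) * x l) + ∑ l, C (γ l) * y l by
            rw [← Finset.sum_add_distrib]; apply Finset.sum_congr rfl; intro l _
            rw [Pi.add_apply]; ring, ihx.1, ihy.1, add_zero]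
        · rw [show ∑ l, C (δ l) * (x + y) l = (∑ l, C (δ l) * x l) + ∑ l, C (δ l) * y l by
            rw [← Finset.sum_add_distrib]; apply Finset.sum_congr rfl; intro l _
            rw [Pi.add_apply]; ring, ihx.2, ihy.2, add_zero]
    | smul s x hx ihx =>
        constructor
        · rw [show ∑ l, C (γ l) * (s • x) l = s * ∑ l, C (γ l) * x l by
            rw [Finset.mul_sum]; apply Finset.sum_congr rfl; intro l _
            rw [Pi.smul_apply, smul_eq_mul]; ring, ihx.1, mul_zero]
        · rw [show ∑ l, C (δ l) * (s • x) l = s * ∑ l, C (δ l) * x l by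
            rw [Finset.mul_sum]; apply Finset.sum_congr rfl; intro l _
            rw [Pi.smul_apply, smul_eq_mul]; ring, ihx.2, mul_zero]
  -- coefficient identities
  have coefid : ∀ e : Fin m → ℂ, (∑ i, C (e i) * q i)
      = (∑ l, e l * γ l) • Q1 + (∑ l, e l * δ l) • Q2 := by
    intro e
    rw [Finset.sum_smul, Finset.sum_smul, ← Finset.sum_add_distrib]
    apply Finset.sum_congr rfl
    intro l _
    rw [← hγδ l, smul_eq_C_mul, smul_eq_C_mul, smul_eq_C_mul, smul_eq_C_mul,
      map_mul, map_mul]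
    ring
  have hc : (∑ l, c l * γ l) = 1 ∧ (∑ l, c l * δ l) = 0 := by
    have h1 : Q1 = (∑ l, c l * γ l) • Q1 + (∑ l, c l * δ l) • Q2 := by
      conv_lhs => rw [hQ1]
      exact coefid c
    have h2 : ((∑ l, c l * γ l) - 1) • Q1 + (∑ l, c l * δ l) • Q2 = 0 := by
      rw [sub_smul, one_smul]
      calc (∑ l, c l * γ l) • Q1 - Q1 + (∑ l, c l * δ l) • Q2
          = ((∑ l, c l * γ l) • Q1 + (∑ l, c l * δ l) • Q2) - Q1 := by ring
        _ = Q1 - Q1 := by rw [← h1]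
        _ = 0 := sub_self _
    obtain ⟨hs, ht⟩ := indep _ _ h2
    exact ⟨sub_eq_zero.mp hs, ht⟩
  have hd : (∑ l, d l * γ l) = 0 ∧ (∑ l, d l * δ l) = 1 := by
    have h1 : Q2 = (∑ l, d l * γ l) • Q1 + (∑ l, d l * δ l) • Q2 := by
      conv_lhs => rw [hQ2]
      exact coefid d
    have h2 : (∑ l, d l * γ l) • Q1 + ((∑ l, d l * δ l) - 1) • Q2 = 0 := by
      rw [sub_smul, one_smul]
      calc (∑ l, d l * γ l) • Q1 + ((∑ l, d l * δ l) • Q2 - Q2)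
          = ((∑ l, d l * γ l) • Q1 + (∑ l, d l * δ l) • Q2) - Q2 := by ring
        _ = Q2 - Q2 := by rw [← h1]
        _ = 0 := sub_self _
    obtain ⟨hs, ht⟩ := indep _ _ h2
    exact ⟨hs, sub_eq_zero.mp ht⟩
  -- evaluate Φ on the Koszul element
  have hT := koszul_combo q hsyz c d
  have hTk1 : ∑ l, C (γ l) * (C (c l) * (∑ i, C (d i) * q i)
      - C (d l) * (∑ i, C (c i) * q i)) = 0 := (hker _ hT).1
  have hval : ∑ l, C (γ l) * (C (c l) * (∑ i, C (d i) * q i)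
      - C (d l) * (∑ i, C (c i) * q i)) = Q2 := by
    rw [← hQ1, ← hQ2]
    have hterm : ∀ l, C (γ l) * (C (c l) * Q2 - C (d l) * Q1)
        = C (c l * γ l) * Q2 - C (d l * γ l) * Q1 := by
      intro l; rw [map_mul, map_mul]; ring
    rw [Finset.sum_congr rfl (fun l _ => hterm l), Finset.sum_sub_distrib,
      ← Finset.sum_mul, ← Finset.sum_mul, ← map_sum, ← map_sum, hc.1, hd.1]
    simp
  rw [hval] at hTk1
  exact hQ2ne hTk1

end Koszul

section Counting

set_option synthInstance.maxHeartbeats 1000000 in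
set_option maxHeartbeats 1000000 in
lemma counting (F : Fin m → MvPolynomial (Fin (n + 1)) ℂ)
    (A : Matrix (Fin (n + 1)) (Fin 3) ℂ)
    (Q1 Q2 : S3) (hQ1h : Q1.IsHomogeneous 2) (hQ2h : Q2.IsHomogeneous 2)
    (hQ1ne : Q1 ≠ 0) (hQ2ne : Q2 ≠ 0) (hrel : IsRelPrime Q1 Q2)
    (hQ1J : Q1 ∈ Ideal.span (Set.range (fun i => restrictTo A (F i))))
    (hQ2J : Q2 ∈ Ideal.span (Set.range (fun i => restrictTo A (F i))))
    (g : S3) (hgJ : g ∈ Ideal.span (Set.range (fun i => restrictTo A (F i))))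
    (hgh : g.IsHomogeneous 2) (hgI : g ∉ Ideal.span {Q1, Q2})
    (b : ℕ) : planeHilbertFn F A (b + 4) ≤ 3 := by
  classical
  set J := Ideal.span (Set.range (fun i => restrictTo A (F i))) with hJ
  set I := Ideal.span ({Q1, Q2} : Set S3) with hI
  have hIJ : I ≤ J := by
    rw [hI, Ideal.span_le]
    rintro z (rfl | rfl)
    · exact hQ1J
    · exact hQ2J
  -- the multiplication map Ψ
  set H2 := homogeneousSubmodule (Fin 3) ℂ (b + 2) with hH2
  set Hb := homogeneousSubmodule (Fin 3) ℂ b with hHb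
  set Hk := homogeneousSubmodule (Fin 3) ℂ (b + 4) with hHk
  let Ψ : (H2 × H2) →ₗ[ℂ] S3 :=
    { toFun := fun x => (x.1 : S3) * Q1 + (x.2 : S3) * Q2
      map_add' := fun x y => by
        simp only [Prod.fst_add, Prod.snd_add, Submodule.coe_add]
        ring
      map_smul' := fun t x => by
        simp only [Prod.smul_fst, Prod.smul_snd, SetLike.val_smul, RingHom.id_apply,
          smul_mul_assoc, smul_add] }
  have hΨ : ∀ x : H2 × H2, Ψ x = (x.1 : S3) * Q1 + (x.2 : S3) * Q2 := fun _ => rfl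
  -- the syzygy map Λ
  let Λ : Hb →ₗ[ℂ] (H2 × H2) :=
    { toFun := fun c => (⟨(c : S3) * Q2, by
          rw [hH2]
          exact ((mem_homogeneousSubmodule b (c : S3)).mp c.2).mul hQ2h⟩,
        ⟨-((c : S3) * Q1), by
          rw [hH2]
          exact Submodule.neg_mem _
            (((mem_homogeneousSubmodule b (c : S3)).mp c.2).mul hQ1h)⟩)
      map_add' := fun x y => by
        refine Prod.ext ?_ ?_ <;> apply Subtype.ext <;>
          simp only [Submodule.coe_add, Prod.fst_add, Prod.snd_add] <;> ring
      map_smul' := fun t x => by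
        refine Prod.ext ?_ ?_ <;> apply Subtype.ext <;>
          simp only [SetLike.val_smul, RingHom.id_apply, Prod.smul_fst, Prod.smul_snd,
            smul_mul_assoc, smul_neg] }
  have hΛinj : Function.Injective Λ := by
    intro x y hxy
    have h1 : (x : S3) * Q2 = (y : S3) * Q2 := congrArg (fun z => (z.1 : S3)) hxy
    exact Subtype.ext (mul_right_cancel₀ hQ2ne h1)
  have hkerrange : LinearMap.ker Ψ = LinearMap.range Λ := by
    apply le_antisymm
    · rintro ⟨x, y⟩ hxy
      have hxy' : (x : S3) * Q1 + (y : S3) * Q2 = 0 := hxy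
      by_cases hx : (x : S3) = 0
      · have hy : (y : S3) = 0 := by
          rw [hx, zero_mul, zero_add] at hxy'
          rcases mul_eq_zero.mp hxy' with h | h
          · exact h
          · exact absurd h hQ2ne
        refine ⟨0, ?_⟩
        rw [map_zero]
        refine (Prod.ext ?_ ?_).symm <;> apply Subtype.ext <;>
          simp [hx, hy]
      · have hdvd : Q2 ∣ (x : S3) := by
          apply hrel.symm.dvd_of_dvd_mul_right (z := Q1)
          exact ⟨-(y : S3), by linear_combination hxy'⟩
        obtain ⟨cc, hcc⟩ := hdvd
        have hccne : cc ≠ 0 := by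
          intro h0; rw [h0, mul_zero] at hcc; exact hx hcc
        have hcchom : cc.IsHomogeneous b := by
          have hxh : ((Q2 * cc) : S3).IsHomogeneous (b + 2) := by
            rw [← hcc]
            exact (mem_homogeneousSubmodule _ _).mp x.2
          obtain ⟨-, h2, h3⟩ := homog_of_mul hxh hQ2ne hccne
          have h4 := hQ2h.totalDegree hQ2ne
          have : cc.totalDegree = b := by omega
          rwa [this] at h2
        have hy : (y : S3) = -(cc * Q1) := by
          have h5 : Q2 * (cc * Q1) = Q2 * (-(y : S3)) := by
            have : (x : S3) * Q1 = -((y : S3) * Q2) := by linear_combination hxy'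
            rw [hcc] at this
            linear_combination this
          have := mul_left_cancel₀ hQ2ne h5
          linear_combination this
        refine ⟨⟨cc, (mem_homogeneousSubmodule _ _).mpr hcchom⟩, ?_⟩
        refine (Prod.ext ?_ ?_).symm <;> apply Subtype.ext
        · show (x : S3) = cc * Q2
          rw [hcc]; ring
        · show (y : S3) = -(cc * Q1)
          exact hy
    · rintro z ⟨c, rfl⟩
      have : Ψ (Λ c) = 0 := by
        rw [hΨ]
        show (c : S3) * Q2 * Q1 + -((c : S3) * Q1) * Q2 = 0
        ring
      exact this
  -- the extra element
  obtain ⟨u, hu, hgu⟩ := exists_monomial_mul_not_mem hrel hQ1ne hQ2ne hgI (b + 2)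
  set gk : S3 := (monomial u 1) * g with hgk
  have hgkh : gk.IsHomogeneous (b + 4) := by
    have := (isHomogeneous_monomial (1 : ℂ) hu).mul hgh
    rwa [show b + 2 + 2 = b + 4 from rfl] at this
  have hgkI : gk ∉ I := hgu
  have hgkJ : gk ∈ J := Ideal.mul_mem_left _ _ hgJ
  have hgkne : gk ≠ 0 := fun h => hgkI (h ▸ I.zero_mem)
  -- the subspace G
  set G : Submodule ℂ S3 := LinearMap.range Ψ ⊔ Submodule.span ℂ {gk} with hG
  have hrangeI : ∀ z ∈ LinearMap.range Ψ, z ∈ I := by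
    rintro z ⟨x, rfl⟩
    rw [hΨ]
    exact Ideal.add_mem _ (Ideal.mul_mem_left _ _ (Ideal.subset_span (by simp)))
      (Ideal.mul_mem_left _ _ (Ideal.subset_span (by simp)))
  have hGJ : G ≤ (J.restrictScalars ℂ) := by
    rw [hG]
    apply sup_le
    · intro z hz
      exact hIJ (hrangeI z hz)
    · rw [Submodule.span_le, Set.singleton_subset_iff]
      exact hgkJ
  have hGH : G ≤ Hk := by
    rw [hG]
    apply sup_le
    · rintro z ⟨x, rfl⟩
      rw [hΨ, hHk]
      apply Submodule.add_mem
      · exact (mem_homogeneousSubmodule _ _).mpr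
          (((mem_homogeneousSubmodule _ _).mp x.1.2).mul hQ1h)
      · exact (mem_homogeneousSubmodule _ _).mpr
          (((mem_homogeneousSubmodule _ _).mp x.2.2).mul hQ2h)
    · rw [Submodule.span_le, Set.singleton_subset_iff]
      exact (mem_homogeneousSubmodule _ _).mpr hgkh
  -- dimension bookkeeping
  haveI : FiniteDimensional ℂ H2 := homogFD (b + 2)
  haveI : FiniteDimensional ℂ Hb := homogFD b
  haveI : FiniteDimensional ℂ Hk := homogFD (b + 4)
  haveI : FiniteDimensional ℂ (H2 × H2) := by infer_instance
  haveI hspanFD : FiniteDimensional ℂ (Submodule.span ℂ ({gk} : Set S3)) :=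
    FiniteDimensional.span_of_finite ℂ (Set.finite_singleton gk)
  have hker_rank : Module.finrank ℂ (LinearMap.ker Ψ) = Module.finrank ℂ Hb := by
    rw [hkerrange, LinearMap.finrank_range_of_inj hΛinj]
  have hrank_nullity : Module.finrank ℂ (LinearMap.range Ψ)
      + Module.finrank ℂ (LinearMap.ker Ψ) = Module.finrank ℂ (H2 × H2) :=
    LinearMap.finrank_range_add_finrank_ker Ψ
  have hprod : Module.finrank ℂ (H2 × H2)
      = Module.finrank ℂ H2 + Module.finrank ℂ H2 := Module.finrank_prod
  have hinf : (LinearMap.range Ψ ⊓ Submodule.span ℂ {gk}) = ⊥ := by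
    rw [eq_bot_iff]
    rintro z ⟨hz1, hz2⟩
    obtain ⟨t, rfl⟩ := Submodule.mem_span_singleton.mp hz2
    rcases eq_or_ne t 0 with rfl | htne
    · rw [zero_smul]; exact Submodule.zero_mem ⊥
    · exfalso
      apply hgkI
      have hzI : t • gk ∈ I := hrangeI _ hz1
      have : gk = t⁻¹ • (t • gk) := by rw [inv_smul_smul₀ htne]
      rw [this, smul_eq_C_mul]
      exact Ideal.mul_mem_left _ _ hzI
  have hspan1 : Module.finrank ℂ (Submodule.span ℂ ({gk} : Set S3)) = 1 :=
    finrank_span_singleton hgkne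
  have hsup : Module.finrank ℂ G
      = Module.finrank ℂ (LinearMap.range Ψ) + 1 := by
    have := Submodule.finrank_sup_add_finrank_inf_eq (LinearMap.range Ψ)
      (Submodule.span ℂ {gk})
    rw [hinf, hspan1, finrank_bot] at this
    rw [hG]
    omega
  -- relate to N
  set N := Submodule.comap Hk.subtype (J.restrictScalars ℂ) with hN
  have hcomapG : Submodule.comap Hk.subtype G ≤ N := by
    rw [hN]
    exact Submodule.comap_mono hGJ
  have hfinG : Module.finrank ℂ (Submodule.comap Hk.subtype G) = Module.finrank ℂ G :=
    (Submodule.comapSubtypeEquivOfLe hGH).finrank_eq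
  have hNbound : Module.finrank ℂ G ≤ Module.finrank ℂ N := by
    rw [← hfinG]
    exact Submodule.finrank_mono hcomapG
  have hquot : Module.finrank ℂ (Hk ⧸ N) + Module.finrank ℂ N = Module.finrank ℂ Hk :=
    Submodule.finrank_quotient_add_finrank N
  have hPH : planeHilbertFn F A (b + 4) = Module.finrank ℂ (Hk ⧸ N) := rfl
  -- numerics
  have e1 := two_mul_finrank_H (b + 4)
  have e2 := two_mul_finrank_H (b + 2)
  have e3 := two_mul_finrank_H b
  obtain ⟨bb, hbb⟩ : ∃ x, x = b * b := ⟨_, rfl⟩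
  have e1' : 2 * Module.finrank ℂ Hk = bb + 11 * b + 30 := by
    rw [hHk, e1, hbb]; ring
  have e2' : 2 * Module.finrank ℂ H2 = bb + 7 * b + 12 := by
    rw [hH2, e2, hbb]; ring
  have e3' : 2 * Module.finrank ℂ Hb = bb + 3 * b + 2 := by
    rw [hHb, e3, hbb]; ring
  rw [hPH]
  omega

end Counting

section Main

set_option maxHeartbeats 1000000 in
theorem stmt7 (F : Fin m → MvPolynomial (Fin (n + 1)) ℂ)
    (hdeg : ∀ i, (F i).IsHomogeneous 2)
    (hK : SatisfiesK F)
    (hnoline : ContainsNoLine F) (hnoconic : ContainsNoConic F) :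
    -- `W` is 4-very ample: no 2-plane meets `X` in a zero-dimensional scheme of
    -- length ≥ 4, i.e. every plane section of `X` has length ≤ 3:
    ∀ A : Matrix (Fin (n + 1)) (Fin 3) ℂ, Function.Injective A.mulVec →
      ∀ᶠ k in Filter.atTop, planeHilbertFn F A k ≤ 3 := by
  intro A hinj
  classical
  set q : Fin m → S3 := fun l => restrictTo A (F l) with hq
  have hqhom : ∀ l, (q l).IsHomogeneous 2 := fun l => restrict_homog A (hdeg l)
  -- conic builder
  have conic : ∀ (p : S3), p.IsHomogeneous 2 → p ≠ 0 →
      (∀ w : Fin 3 → ℂ, eval w p = 0 → ∀ l, eval w (q l) = 0) → False := by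
    intro p hp hpne hvan
    apply hnoconic
    refine ⟨A, hinj, p, hp, hpne, ?_⟩
    intro w hw
    intro i
    show eval (A.mulVec w) (F i) = 0
    rw [← eval_restrictTo]
    exact hvan w hw i
  by_cases hzero : ∀ l, q l = 0
  · exact (conic (X 0 * X 0) ((isHomogeneous_X _ _).mul (isHomogeneous_X _ _))
      (mul_ne_zero (X_ne_zero _) (X_ne_zero _))
      (fun w _ l => by rw [hzero l, map_zero])).elim
  push_neg at hzero
  obtain ⟨i0, hi0⟩ := hzero
  by_cases hcommon : ∃ p : S3, Prime p ∧ ∀ l, p ∣ q l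
  · obtain ⟨p, hp, hpall⟩ := hcommon
    obtain ⟨r, hr⟩ := hpall i0
    have hpne : p ≠ 0 := hp.ne_zero
    have hrne : r ≠ 0 := fun h => hi0 (by rw [hr, h, mul_zero])
    have hq2 : (p * r).IsHomogeneous 2 := by rw [← hr]; exact hqhom i0
    obtain ⟨hph, hrh, hsum⟩ := homog_of_mul hq2 hpne hrne
    have hdp : p.totalDegree ≠ 0 := by
      intro h0
      have hC := homog_zero_eq_C (h0 ▸ hph)
      have hcne : coeff 0 p ≠ 0 := fun hc => hpne (by rw [hC, hc, map_zero])
      exact hp.not_unit (hC ▸ isUnit_iff_exists_inv.mpr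
        ⟨C (coeff 0 p)⁻¹, by rw [← map_mul, mul_inv_cancel₀ hcne, map_one]⟩)
    have hvanp : ∀ w : Fin 3 → ℂ, eval w p = 0 → ∀ l, eval w (q l) = 0 := by
      intro w hw l
      obtain ⟨rl, hrl⟩ := hpall l
      rw [hrl, map_mul, hw, zero_mul]
    rcases (show p.totalDegree = 1 ∨ p.totalDegree = 2 by omega) with h1 | h2
    · refine (conic (p * p) ?_ (mul_ne_zero hpne hpne) ?_).elim
      · have := hph.mul hph
        rwa [h1] at this
      · intro w hw l
        rw [map_mul, mul_self_eq_zero] at hw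
        exact hvanp w hw l
    · exact (conic p (h2 ▸ hph) hpne hvanp).elim
  push_neg at hcommon
  set Q1 := q i0 with hQ1def
  have hQ1h : Q1.IsHomogeneous 2 := hqhom i0
  have hQ1ne : Q1 ≠ 0 := hi0
  have hQ1nu : ¬ IsUnit Q1 := not_unit_of_homog hQ1h hQ1ne (by norm_num)
  set P := (UniqueFactorizationMonoid.factors Q1).toFinset with hP
  have hPprime : ∀ p ∈ P, Prime p := fun p hp =>
    UniqueFactorizationMonoid.prime_of_factor p (Multiset.mem_toFinset.mp hp)
  have hPex : ∀ p ∈ P, ∃ l, ¬ p ∣ q l := fun p hp => hcommon p (hPprime p hp)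
  obtain ⟨d, hd⟩ := avoid q P hPprime hPex
  set Q2 := ∑ i, C (d i) * q i with hQ2def
  have hPne : P.Nonempty := by
    obtain ⟨r, hrirr, hrdvd⟩ := WfDvdMonoid.exists_irreducible_factor hQ1nu hQ1ne
    obtain ⟨p, hpmem, -⟩ :=
      UniqueFactorizationMonoid.exists_mem_factors_of_dvd hQ1ne hrirr hrdvd
    exact ⟨p, Multiset.mem_toFinset.mpr hpmem⟩
  have hQ2ne : Q2 ≠ 0 := by
    obtain ⟨p, hpP⟩ := hPne
    intro h0
    exact hd p hpP (h0 ▸ dvd_zero p)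
  have hQ2h : Q2.IsHomogeneous 2 :=
    IsHomogeneous.sum _ _ _ (fun l _ => (hqhom l).C_mul _)
  have hrel : IsRelPrime Q1 Q2 := by
    intro e he1 he2
    by_contra hu
    have he0 : e ≠ 0 := fun h => hQ1ne (zero_dvd_iff.mp (h ▸ he1))
    obtain ⟨r, hrirr, hrdvd⟩ := WfDvdMonoid.exists_irreducible_factor hu he0
    obtain ⟨p, hpmem, hassoc⟩ :=
      UniqueFactorizationMonoid.exists_mem_factors_of_dvd hQ1ne hrirr (hrdvd.trans he1)
    exact hd p (Multiset.mem_toFinset.mpr hpmem)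
      ((hassoc.symm.dvd).trans (hrdvd.trans he2))
  have hsyz : ∀ i j : Fin m, Pi.single i (q j) - Pi.single j (q i) ∈
      Submodule.span S3 (LSyz q) := fun i j => koszul_restrict A F hK i j
  by_cases hall : ∀ l, q l ∈ Submodule.span ℂ ({Q1, Q2} : Set S3)
  · exfalso
    have hQ1combo : Q1 = ∑ i, C ((Pi.single i0 (1 : ℂ) : Fin m → ℂ) i) * q i := by
      rw [Finset.sum_eq_single i0]
      · rw [Pi.single_eq_same, map_one, one_mul]
      · intro l _ hl
        rw [Pi.single_eq_of_ne hl, map_zero, zero_mul]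
      · intro h
        exact absurd (Finset.mem_univ i0) h
    exact koszul_contra q hsyz (Pi.single i0 1) d Q1 Q2 hQ1combo hQ2def hrel
      hQ1h hQ2h hQ1ne hQ2ne hall
  · push_neg at hall
    obtain ⟨l0, hl0⟩ := hall
    have hgI : q l0 ∉ Ideal.span ({Q1, Q2} : Set S3) := fun hmem =>
      hl0 (mem_pair_quadric hQ1h hQ2h (hqhom l0) hmem)
    rw [Filter.eventually_atTop]
    refine ⟨4, fun k hk => ?_⟩
    obtain ⟨b, rfl⟩ : ∃ b, k = b + 4 := ⟨k - 4, by omega⟩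
    exact counting F A Q1 Q2 hQ1h hQ2h hQ1ne hQ2ne hrel
      (Ideal.subset_span ⟨i0, rfl⟩)
      (Ideal.sum_mem _ (fun l _ =>
        Ideal.mul_mem_left _ _ (Ideal.subset_span ⟨l, rfl⟩)))
      (q l0) (Ideal.subset_span ⟨l0, rfl⟩) (hqhom l0) hgI b

end Main
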